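/- arXiv:math/0202232 — 2 statements merged into one kernel-verified Lean document; each statement's English description precedes it below -/
import Mathlib

section
/- Let q be a complex number with 0<|q|<1, let p≥1, let c_1,...,c_p be nonzero complex numbers, and let y_1,...,y_p be nonnegative integers with |y| = y_1+...+y_p. Then ∏_{k,l=1}^p (q c_k/c_l)_{y_k} / (q^{-y_l} c_k/c_l)_{y_k} = (-1)^{|y|} q^{|y| + binom(|y|,2)} ∏_{1≤k<l≤p} (c_k q^{y_k} - c_l q^{y_l})/(c_k - c_l), provided no denominator vanishes. -/
/-!
Split the double product into its diagonal and the pairs `k < l`. On the diagonal,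
`(q)_n / (q^{-n})_n = (-1)^n q^{n + binom(n,2)}` by reversing the order of the factors. For a pair,
with `a = c_k / c_l`, `m = y_k`, `n = y_l`, both `(qa)_m (q/a)_n (1 - a)` and
`(q^{-n}a)_m (q^{-m}/a)_n (1 - a q^{m-n})` are, up to a power of `q`, the product of `1 - a q^i`
over `-n ≤ i ≤ m`; this gives the factor `q^{mn} (c_k q^{y_k} - c_l q^{y_l}) / (c_k - c_l)`.
The powers of `q` add up to `|y| + binom(|y|,2)` since
`binom(|y|,2) = ∑ binom(y_k,2) + ∑_{k<l} y_k y_l`.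
-/

open Finset

/-- q-shifted factorial `(a;q)_k` for natural `k`. -/
noncomputable def qPoch (q a : ℂ) (k : ℕ) : ℂ := ∏ j ∈ Finset.range k, (1 - a * q ^ j)

section qPoch

variable {q : ℂ}

lemma qPoch_zero (q a : ℂ) : qPoch q a 0 = 1 := prod_range_zero _

lemma qPoch_succ (q a : ℂ) (n : ℕ) : qPoch q a (n + 1) = qPoch q a n * (1 - a * q ^ n) :=
  prod_range_succ _ _

lemma qPoch_succ' (q a : ℂ) (n : ℕ) : qPoch q a (n + 1) = (1 - a) * qPoch q (q * a) n := by
  rw [qPoch, qPoch, prod_range_succ', pow_zero, mul_one, mul_comm]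
  congr 1
  exact prod_congr rfl fun j _ => by ring

lemma qPoch_self_eq (hq : q ≠ 0) (n : ℕ) :
    qPoch q q n = (-1) ^ n * q ^ (n + n.choose 2) * qPoch q (q ^ n)⁻¹ n := by
  induction n with
  | zero => simp [qPoch_zero]
  | succ n ih =>
    have hshift : q * (q ^ (n + 1))⁻¹ = (q ^ n)⁻¹ := by rw [pow_succ]; field_simp
    rw [qPoch_succ q q, qPoch_succ' q (q ^ (n + 1))⁻¹, hshift, ih, Nat.choose_succ_succ',
      Nat.choose_one_right]
    field_simp
    ring

lemma qPoch_mul_qPoch_inv (hq : q ≠ 0) {a : ℂ} (ha : a ≠ 0) (m n : ℕ) :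
    qPoch q (q * a) m * qPoch q (q * a⁻¹) n * (1 - a) =
      q ^ (m * n + n) * qPoch q ((q ^ n)⁻¹ * a) m * qPoch q ((q ^ m)⁻¹ * a⁻¹) n *
        (1 - a * q ^ m * (q ^ n)⁻¹) := by
  induction n with
  | zero =>
    simp only [qPoch_zero, mul_zero, add_zero, pow_zero, inv_one, one_mul, mul_one]
    rw [← qPoch_succ, qPoch_succ', mul_comm]
  | succ n ih =>
    have hshift : q * ((q ^ (n + 1))⁻¹ * a) = (q ^ n)⁻¹ * a := by rw [pow_succ]; field_simp
    have h := (qPoch_succ q ((q ^ (n + 1))⁻¹ * a) m).symm.trans (qPoch_succ' _ _ m)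
    rw [hshift] at h
    have hs : q ^ (m * (n + 1) + (n + 1)) * (1 - (q ^ m)⁻¹ * a⁻¹ * q ^ n) *
          (1 - (q ^ (n + 1))⁻¹ * a) =
        q ^ (m * n + n) * (1 - a * q ^ m * (q ^ n)⁻¹) * (1 - q * a⁻¹ * q ^ n) := by
      field_simp
      ring
    rw [qPoch_succ, qPoch_succ]
    linear_combination (1 - q * a⁻¹ * q ^ n) * ih
      - q ^ (m * (n + 1) + (n + 1)) * qPoch q ((q ^ m)⁻¹ * a⁻¹) n
        * (1 - (q ^ m)⁻¹ * a⁻¹ * q ^ n) * h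
      - qPoch q ((q ^ n)⁻¹ * a) m * qPoch q ((q ^ m)⁻¹ * a⁻¹) n * hs

lemma qPoch_div_qPoch_diag (hq : q ≠ 0) {b : ℂ} (hb : b ≠ 0) (n : ℕ)
    (hden : qPoch q (q ^ (-(n : ℤ)) * b / b) n ≠ 0) :
    qPoch q (q * b / b) n / qPoch q (q ^ (-(n : ℤ)) * b / b) n =
      (-1) ^ n * q ^ (n + n.choose 2) := by
  simp only [mul_div_cancel_right₀ _ hb, zpow_neg, zpow_natCast] at hden ⊢
  rw [div_eq_iff hden, qPoch_self_eq hq]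

lemma qPoch_div_qPoch_mul_qPoch_div_qPoch (hq : q ≠ 0) {b c : ℂ} (hb : b ≠ 0) (hc : c ≠ 0)
    (hbc : b ≠ c) (m n : ℕ) (hden₁ : qPoch q (q ^ (-(n : ℤ)) * b / c) m ≠ 0)
    (hden₂ : qPoch q (q ^ (-(m : ℤ)) * c / b) n ≠ 0) :
    qPoch q (q * b / c) m / qPoch q (q ^ (-(n : ℤ)) * b / c) m *
        (qPoch q (q * c / b) n / qPoch q (q ^ (-(m : ℤ)) * c / b) n) =
      q ^ (m * n) * ((b * q ^ m - c * q ^ n) / (b - c)) := by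
  have key := qPoch_mul_qPoch_inv hq (div_ne_zero hb hc) m n
  simp only [zpow_neg, zpow_natCast, mul_div_assoc, inv_div] at key hden₁ hden₂ ⊢
  have hbc' : 1 - b / c ≠ 0 := sub_ne_zero.mpr (div_ne_one_of_ne hbc).symm
  rw [div_mul_div_comm, div_eq_iff (mul_ne_zero hden₁ hden₂)]
  apply mul_right_cancel₀ hbc'
  rw [key]
  have hsub : b - c ≠ 0 := sub_ne_zero.mpr hbc
  field_simp
  ring

end qPoch

@[to_additive]
lemma Finset.prod_prod_eq_prod_diag_mul_prod_prod_Ioi {ι M : Type*} [Fintype ι] [LinearOrder ι]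
    [LocallyFiniteOrderTop ι] [LocallyFiniteOrderBot ι] [CommMonoid M] (F : ι → ι → M) :
    ∏ k, ∏ l, F k l = (∏ k, F k k) * ∏ k, ∏ l ∈ Ioi k, F k l * F l k := by
  rw [prod_prod_Ioi_mul_eq_prod_prod_off_diag (fun l k => F k l), ← prod_mul_distrib]
  exact prod_congr rfl fun k _ => Fintype.prod_eq_mul_prod_compl k _

lemma sum_add_choose_two_add_sum_sum_Ioi_mul {ι : Type*} [Fintype ι] [LinearOrder ι]
    [LocallyFiniteOrderTop ι] [LocallyFiniteOrderBot ι] (y : ι → ℕ) :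
    ∑ k, (y k + (y k).choose 2) + ∑ k, ∑ l ∈ Ioi k, y k * y l =
      ∑ k, y k + (∑ k, y k).choose 2 := by
  have hsq : (∑ k, (y k : ℚ)) * ∑ k, (y k : ℚ) =
      ∑ k, (y k : ℚ) * y k + ∑ k, ∑ l ∈ Ioi k, ((y k : ℚ) * y l + y l * y k) := by
    rw [sum_mul_sum, sum_sum_eq_sum_diag_add_sum_sum_Ioi]
  apply Nat.cast_injective (R := ℚ)
  push_cast [Nat.cast_choose_two, sum_add_distrib, ← sum_div, mul_sub, mul_one, sum_sub_distrib]
  simp only [mul_comm (y _ : ℚ) (y _), ← two_mul, ← mul_sum] at hsq ⊢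
  linear_combination -hsq / 2

theorem stmt1_general (q : ℂ) (hq0 : 0 < ‖q‖)
    (p : ℕ) (c : Fin p → ℂ) (hc0 : ∀ i, c i ≠ 0)
    (y : Fin p → ℕ)
    (hden : ∀ k l : Fin p, qPoch q (q ^ (-(y l : ℤ)) * c k / c l) (y k) ≠ 0)
    (hcc : ∀ k l : Fin p, k ≠ l → c k ≠ c l) :
    (∏ k : Fin p, ∏ l : Fin p,
        qPoch q (q * c k / c l) (y k) / qPoch q (q ^ (-(y l : ℤ)) * c k / c l) (y k)) =
    (-1) ^ (∑ i, y i) * q ^ ((∑ i, y i) + Nat.choose (∑ i, y i) 2) *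
      ∏ k : Fin p, ∏ l ∈ Finset.univ.filter (fun l => k < l),
        (c k * q ^ y k - c l * q ^ y l) / (c k - c l) := by
  have hq : q ≠ 0 := norm_pos_iff.mp hq0
  simp only [filter_lt_eq_Ioi]
  rw [prod_prod_eq_prod_diag_mul_prod_prod_Ioi, ← sum_add_choose_two_add_sum_sum_Ioi_mul,
    prod_congr rfl fun k _ => qPoch_div_qPoch_diag hq (hc0 k) (y k) (hden k k),
    prod_congr rfl fun k _ => prod_congr rfl fun l hl =>
      qPoch_div_qPoch_mul_qPoch_div_qPoch hq (hc0 k) (hc0 l) (hcc k l (mem_Ioi.mp hl).ne)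
        (y k) (y l) (hden k l) (hden l k)]
  simp only [prod_mul_distrib, prod_pow_eq_pow_sum, sum_add_distrib, pow_add]
  ring

theorem stmt1 (q : ℂ) (hq0 : 0 < ‖q‖) (hq1 : ‖q‖ < 1)
    (p : ℕ) (hp : 1 ≤ p) (c : Fin p → ℂ) (hc0 : ∀ i, c i ≠ 0)
    (y : Fin p → ℕ)
    (hden : ∀ k l : Fin p, qPoch q (q ^ (-(y l : ℤ)) * c k / c l) (y k) ≠ 0)
    (hcc : ∀ k l : Fin p, k ≠ l → c k ≠ c l) :
    (∏ k : Fin p, ∏ l : Fin p,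
        qPoch q (q * c k / c l) (y k) / qPoch q (q ^ (-(y l : ℤ)) * c k / c l) (y k)) =
    (-1) ^ (∑ i, y i) * q ^ ((∑ i, y i) + Nat.choose (∑ i, y i) 2) *
      ∏ k : Fin p, ∏ l ∈ Finset.univ.filter (fun l => k < l),
        (c k * q ^ y k - c l * q ^ y l) / (c k - c l) :=
  stmt1_general q hq0 p c hc0 y hden hcc
end

section
/- (Reindexing identity between {0,1}-vectors and block counts.) Let m_1,...,m_p be positive integers with |m| = ∑m_i, and let d = (d_1,...,d_{|m|}) = (c_1, qc_1,...,q^{m_1-1}c_1, ..., c_p, qc_p,...,q^{m_p-1}c_p) for nonzero complex c_i and nonzero complex q that is not a root of unity. Then for x ∈ {0,1}^{|m|}, the product ∏_{1≤i<j≤|m|} (d_i q^{-x_i} - d_j q^{-x_j})/(d_i - d_j) is nonzero only if x has the block form x = (1,...,1,0,...,0; ... ;1,...,1,0,...,0) with y_i ones in block i for some 0 ≤ y_i ≤ m_i; equivalently, the product vanishes whenever some block of x contains a 0 followed (within the same block) by a 1. -/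
open Finset

lemma stmt19_adj (f : ℕ → ℕ) (hf : ∀ i, f i ≤ 1) :
    ∀ b a, a < b → f a = 0 → f b = 1 →
      ∃ k, a ≤ k ∧ k + 1 ≤ b ∧ f k = 0 ∧ f (k + 1) = 1 := by
  intro b
  induction b with
  | zero => intro a hab; omega
  | succ b ih =>
    intro a hab h0 h1
    by_cases hb : f b = 0
    · rcases Nat.lt_or_ge a b with h | h
      · exact ⟨b, by omega, by omega, hb, h1⟩
      · have : a = b := by omega
        subst this
        exact ⟨a, le_refl _, by omega, h0, h1⟩
    · have hb1 : f b = 1 := by have := hf b; omega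
      rcases Nat.lt_or_ge a b with h | h
      · obtain ⟨k, h1', h2', h3', h4'⟩ := ih a h h0 hb1
        exact ⟨k, h1', by omega, h3', h4'⟩
      · have : a = b := by omega
        subst this
        omega

/-- The vanishing property of the factor `∏_{i<j} (d_i q^{-x_i} - d_j q^{-x_j})/(d_i - d_j)`
for `d` of block form `(c_1, qc_1, …, q^{m_1-1}c_1, …, c_p, …, q^{m_p-1}c_p)`.
The index set is encoded as `Σ j : Fin p, Fin (m j)` with the lexicographic order
(block index first, then position inside the block), and `d ⟨j,t⟩ = q^t c_j`. -/
theorem stmt19 (q : ℂ) (hq : q ≠ 0) (hqroot : ∀ n : ℕ, n ≠ 0 → q ^ n ≠ 1)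
    (p : ℕ) (m : Fin p → ℕ) (hm : ∀ j, 1 ≤ m j)
    (c : Fin p → ℂ) (hc : ∀ j, c j ≠ 0)
    (x : (Σ j : Fin p, Fin (m j)) → ℕ) (hx : ∀ s, x s ≤ 1)
    (hbad : ∃ (j : Fin p) (t t' : Fin (m j)),
      (t : ℕ) < (t' : ℕ) ∧ x ⟨j, t⟩ = 0 ∧ x ⟨j, t'⟩ = 1) :
    (∏ s : Σ j : Fin p, Fin (m j),
      ∏ s' ∈ Finset.univ.filter
          (fun s' : Σ j : Fin p, Fin (m j) =>
            s.1 < s'.1 ∨ (s.1 = s'.1 ∧ (s.2 : ℕ) < (s'.2 : ℕ))),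
        ((q ^ (s.2 : ℕ) * c s.1) * q ^ (-(x s : ℤ)) -
            (q ^ (s'.2 : ℕ) * c s'.1) * q ^ (-(x s' : ℤ))) /
          (q ^ (s.2 : ℕ) * c s.1 - q ^ (s'.2 : ℕ) * c s'.1)) = 0 := by
  obtain ⟨j, t, t', htt, h0, h1⟩ := hbad
  set f : ℕ → ℕ := fun k => if h : k < m j then x ⟨j, ⟨k, h⟩⟩ else 0 with hf
  have hf1 : ∀ i, f i ≤ 1 := by
    intro i; simp only [hf]; split
    · exact hx _
    · omega
  obtain ⟨k, hk1, hk2, hk3, hk4⟩ := stmt19_adj f hf1 t'.val t.val htt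
    (by simp [hf, t.isLt, Fin.eta]; exact h0)
    (by simp [hf, t'.isLt, Fin.eta]; exact h1)
  have hklt : k < m j := by omega
  have hk1lt : k + 1 < m j := by omega
  have hx0 : x ⟨j, ⟨k, hklt⟩⟩ = 0 := by simpa [hf, hklt] using hk3
  have hx1 : x ⟨j, ⟨k + 1, hk1lt⟩⟩ = 1 := by simpa [hf, hk1lt] using hk4
  apply Finset.prod_eq_zero (Finset.mem_univ (⟨j, ⟨k, hklt⟩⟩ : Σ j : Fin p, Fin (m j)))
  apply Finset.prod_eq_zero (i := (⟨j, ⟨k + 1, hk1lt⟩⟩ : Σ j : Fin p, Fin (m j)))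
  · simp
  · rw [hx0, hx1]
    have : (q ^ k * c j) * q ^ (-((0:ℕ) : ℤ)) -
        (q ^ (k+1) * c j) * q ^ (-((1:ℕ) : ℤ)) = 0 := by
      simp only [Nat.cast_zero, neg_zero, zpow_zero, mul_one, Nat.cast_one, zpow_neg, zpow_one]
      field_simp
      ring
    simp only [this]
    exact zero_div _
end
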